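/- There exists an absolute constant c > 0 such that for every n ≥ 2, p ≥ 1, σ > 0 and Δ > 0, the minimax risk satisfies Ψ_Δ ≥ c · Φ^c(Δ/σ). -/

import Mathlib

open MeasureTheory ProbabilityTheory Filter Finset Asymptotics
open scoped ENNReal

noncomputable section

/-- Euclidean norm on `Fin p → ℝ`. -/
def eucNorm {p : ℕ} (θ : Fin p → ℝ) : ℝ := Real.sqrt (∑ i, θ i ^ 2)

/-- The set of label vectors in `{-1,1}^n`. -/
def pmOne (n : ℕ) : Set (Fin n → ℝ) := {η | ∀ i, η i = 1 ∨ η i = -1}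

/-- `sgn s = 1` if `s ≥ 0` and `-1` otherwise. -/
def sgn (s : ℝ) : ℝ := if 0 ≤ s then 1 else -1

/-- Hamming-type loss `r(a,b) = min over ν ∈ {±1} of Σ_j |a_j - ν b_j|`. -/
def lossR {n : ℕ} (a b : Fin n → ℝ) : ℝ :=
  min (∑ j, |a j - b j|) (∑ j, |a j + b j|)

/-- Law of `Y = θ ηᵀ + W`, where `W` has i.i.d. `N(0,σ²)` entries. -/
def lawY (p n : ℕ) (σ : ℝ) (θ : Fin p → ℝ) (η : Fin n → ℝ) :
    Measure (Fin p → Fin n → ℝ) :=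
  Measure.pi fun i => Measure.pi fun j => gaussianReal (θ i * η j) (σ ^ 2).toNNReal

/-- Parameter set `Ω_Δ = {θ : ‖θ‖ ≥ Δ} × {-1,1}^n`. -/
def Omega (p n : ℕ) (Δ : ℝ) : Set ((Fin p → ℝ) × (Fin n → ℝ)) :=
  {x | Δ ≤ eucNorm x.1 ∧ x.2 ∈ pmOne n}

/-- Expected loss of an estimator `f` at `(θ, η)`. -/
def risk (p n : ℕ) (σ : ℝ) (f : (Fin p → Fin n → ℝ) → Fin n → ℝ)
    (θ : Fin p → ℝ) (η : Fin n → ℝ) : ℝ :=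
  ∫ y, lossR (f y) η ∂(lawY p n σ θ η)

/-- Minimax risk `Ψ_Δ`. -/
def minimaxRisk (p n : ℕ) (σ Δ : ℝ) : ℝ :=
  ⨅ f : {f : (Fin p → Fin n → ℝ) → Fin n → ℝ // Measurable f ∧ ∀ y, f y ∈ pmOne n},
    ⨆ x : Omega p n Δ, (n : ℝ)⁻¹ * risk p n σ f.1 x.1.1 x.1.2

/-- Standard Gaussian upper tail `Φᶜ(t) = P(Z > t)`. -/
def Phic (t : ℝ) : ℝ := ((gaussianReal 0 1) {x | t < x}).toReal

/-- Signal-to-noise ratio `r_n = (Δ²/σ²)/√(Δ²/σ² + p/n)`. -/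
def snr (p n : ℕ) (σ Δ : ℝ) : ℝ :=
  (Δ ^ 2 / σ ^ 2) / Real.sqrt (Δ ^ 2 / σ ^ 2 + (p : ℝ) / n)

/-- Gaussian product measure on `Fin p → ℝ` with i.i.d. centered coordinates of variance `v`. -/
def gaussVec (p : ℕ) (v : ℝ) : Measure (Fin p → ℝ) :=
  Measure.pi fun _ => gaussianReal 0 v.toNNReal

/-- `G_σ(t, θ) = P((θ + σξ₁)ᵀ(θ + (σ/(n-1)) Σ_{j=2}^n ξ_j) ≤ ‖θ‖² t)` for i.i.d.
standard Gaussian vectors `ξ₁, …, ξ_n` in `ℝ^p`. -/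
def Gfun (p n : ℕ) (σ t : ℝ) (θ : Fin p → ℝ) : ℝ :=
  (((gaussVec p 1).prod (Measure.pi fun _ : Fin (n - 1) => gaussVec p 1))
    {ξ | ∑ i, (θ i + σ * ξ.1 i) * (θ i + σ / ((n : ℝ) - 1) * ∑ j, ξ.2 j i)
        ≤ eucNorm θ ^ 2 * t}).toReal

/-- Hollowed Gram matrix `H(YᵀY)` of the observation `y`, as a function. -/
def hollowGram {p n : ℕ} (y : Fin p → Fin n → ℝ) : Fin n → Fin n → ℝ :=
  fun a b => if a = b then 0 else ∑ i, y i a * y i b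

/-- `v` is a unit-norm eigenvector of the matrix `M` for its largest eigenvalue. -/
def IsTopEigenvector {n : ℕ} (M : Fin n → Fin n → ℝ) (v : Fin n → ℝ) : Prop :=
  eucNorm v = 1 ∧ ∃ μ : ℝ, (∀ a, ∑ b, M a b * v b = μ * v a) ∧
    ∀ μ' : ℝ, (∃ w : Fin n → ℝ, w ≠ 0 ∧ ∀ a, ∑ b, M a b * w b = μ' * w a) → μ' ≤ μ

/-- A spectral estimator: the entrywise sign of a measurable selection of a unit-norm
top eigenvector of `H(YᵀY)`. -/
def IsSpectralEstimator (p n : ℕ) (f : (Fin p → Fin n → ℝ) → Fin n → ℝ) : Prop :=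
  Measurable f ∧ ∃ v : (Fin p → Fin n → ℝ) → Fin n → ℝ, Measurable v ∧
    (∀ y, IsTopEigenvector (hollowGram y) (v y)) ∧
    ∀ y a, f y a = sgn (v y a)

/-- Lloyd iterations `η̂^{k+1}(Y) = sign(H(YᵀY) η̂^k(Y))`, started from `f0`. -/
def lloydIter {p n : ℕ} (f0 : (Fin p → Fin n → ℝ) → Fin n → ℝ) :
    ℕ → (Fin p → Fin n → ℝ) → Fin n → ℝ
  | 0 => f0
  | k + 1 => fun y a => sgn (∑ b, hollowGram y a b * lloydIter f0 k y b)

/-- Operator (spectral) norm of a real matrix with respect to Euclidean norms. -/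
def opNorm {m n : ℕ} (M : Matrix (Fin m) (Fin n) ℝ) : ℝ :=
  ‖LinearMap.toContinuousLinearMap (Matrix.toEuclideanLin M)‖

/-- `H(M)`: the matrix `M` with its diagonal entries replaced by zero. -/
def hollow {n : ℕ} (M : Matrix (Fin n) (Fin n) ℝ) : Matrix (Fin n) (Fin n) ℝ :=
  Matrix.of fun a b => if a = b then 0 else M a b

/-- Gram matrix `WᵀW` of a `p × n` array `w`. -/
def gramMat {p n : ℕ} (w : Fin p → Fin n → ℝ) : Matrix (Fin n) (Fin n) ℝ :=
  Matrix.of fun a b => ∑ i, w i a * w i b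

/-- Law of a `p × n` random matrix with i.i.d. `N(0, τ²)` entries. -/
def lawW (p n : ℕ) (τ : ℝ) : Measure (Fin p → Fin n → ℝ) :=
  Measure.pi fun _ => Measure.pi fun _ => gaussianReal 0 (τ ^ 2).toNNReal

/-- Rademacher (uniform ±1) measure on `ℝ`. -/
def rademacher : Measure ℝ :=
  (2 : ℝ≥0∞)⁻¹ • Measure.dirac (1 : ℝ) + (2 : ℝ≥0∞)⁻¹ • Measure.dirac (-1 : ℝ)

instance : IsProbabilityMeasure rademacher := by
  constructor
  simp [rademacher, Measure.add_apply, Measure.smul_apply, smul_eq_mul]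
  rw [ENNReal.inv_two_add_inv_two]

/-- i.i.d. Rademacher vector measure on `Fin n → ℝ`. -/
def radVec (n : ℕ) : Measure (Fin n → ℝ) := Measure.pi fun _ => rademacher


/-!
Take `θ = Δ e₁` and average the risk over all `2ⁿ` sign vectors `η`. For `±1` vectors the loss
`r(η̂, η)` is at least `1/n` times the number of pairs `(j, k)` with `η̂ⱼ η̂ₖ ≠ ηⱼ ηₖ`, a count that
does not see the global sign. Flipping `ηⱼ` changes the law of `Y` only in the entry `(1, j)`, whose
mean goes from `Δ ηⱼ` to `-Δ ηⱼ`, so no test separates the two laws with total error below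
`2 Φᶜ(Δ/σ)`; for `k ≠ j` the event `η̂ⱼ η̂ₖ = ηⱼ ηₖ` is such a test. Hence each of the `n(n-1)`
pairs costs `Φᶜ(Δ/σ)` on average, and some `η` has risk at least `(n-1) Φᶜ(Δ/σ) ≥ n Φᶜ(Δ/σ) / 2`.
-/

open scoped NNReal

section Testing

variable {α β : Type*} [MeasurableSpace α] [MeasurableSpace β]

def IsTestingLowerBound (ε : ℝ≥0∞) (μ ν : Measure α) : Prop :=
  ∀ A, MeasurableSet A → ε ≤ μ A + ν Aᶜ

namespace IsTestingLowerBound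

variable {ε : ℝ≥0∞} {μ ν : Measure α}

lemma symm (h : IsTestingLowerBound ε μ ν) : IsTestingLowerBound ε ν μ := fun A hA => by
  simpa [add_comm] using h Aᶜ hA.compl

lemma map {f : α → β} (hf : Measurable f) (h : IsTestingLowerBound ε μ ν) :
    IsTestingLowerBound ε (μ.map f) (ν.map f) := fun A hA => by
  rw [Measure.map_apply hf hA, Measure.map_apply hf hA.compl, Set.preimage_compl]
  exact h _ (hf hA)

lemma prod [SFinite μ] [SFinite ν] (h : IsTestingLowerBound ε μ ν) (ρ : Measure β)
    [IsProbabilityMeasure ρ] : IsTestingLowerBound ε (μ.prod ρ) (ν.prod ρ) := fun A hA => by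
  rw [Measure.prod_apply_symm hA, Measure.prod_apply_symm hA.compl,
    ← lintegral_add_left (measurable_measure_prodMk_right hA)]
  calc ε = ∫⁻ _, ε ∂ρ := by simp
    _ ≤ _ := lintegral_mono fun y => h _ (measurable_prodMk_right hA)

end IsTestingLowerBound

lemma isTestingLowerBound_of_restrict_le {μ ν : Measure α} {S : Set α} (hS : MeasurableSet S)
    (hμν : μ.restrict S ≤ ν.restrict S) (hνμ : ν.restrict Sᶜ ≤ μ.restrict Sᶜ) :
    IsTestingLowerBound (μ S + ν Sᶜ) μ ν := fun A hA => by
  have hsplit : ∀ (ρ : Measure α) B, ρ B = ρ.restrict S B + ρ.restrict Sᶜ B := fun ρ B => by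
    rw [← Measure.add_apply, Measure.restrict_add_restrict_compl hS]
  calc μ S + ν Sᶜ = μ.restrict S A + μ.restrict S Aᶜ + (ν.restrict Sᶜ A + ν.restrict Sᶜ Aᶜ) := by
        rw [measure_add_measure_compl hA, measure_add_measure_compl hA,
          Measure.restrict_apply_univ, Measure.restrict_apply_univ]
    _ ≤ μ.restrict S A + ν.restrict S Aᶜ + (μ.restrict Sᶜ A + ν.restrict Sᶜ Aᶜ) := by
        gcongr
    _ = μ A + ν Aᶜ := by rw [hsplit μ A, hsplit ν Aᶜ]; ring

lemma IsTestingLowerBound.pi {ι : Type*} [Fintype ι] [DecidableEq ι] {X : ι → Type*}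
    [∀ i, MeasurableSpace (X i)] {ε : ℝ≥0∞} {κ κ' : ∀ i, Measure (X i)}
    [∀ i, IsProbabilityMeasure (κ i)] [∀ i, IsProbabilityMeasure (κ' i)] (i₀ : ι)
    (h : IsTestingLowerBound ε (κ i₀) (κ' i₀)) (hκ : ∀ i, i ≠ i₀ → κ i = κ' i) :
    IsTestingLowerBound ε (Measure.pi κ) (Measure.pi κ') := by
  let e := MeasurableEquiv.piEquivPiSubtypeProd X (· = i₀)
  have hrest : (Measure.pi fun i : {i // ¬i = i₀} => κ i)
      = Measure.pi fun i : {i // ¬i = i₀} => κ' i := by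
    congr 1
    exact funext fun i => hκ i i.2
  have hprod := ((h.map (MeasurableEquiv.piUnique _).symm.measurable).prod
    (Measure.pi fun i : {i // ¬i = i₀} => κ i)).map e.symm.measurable
  rw [← (measurePreserving_piEquivPiSubtypeProd κ (· = i₀)).symm.map_eq,
    ← (measurePreserving_piEquivPiSubtypeProd κ' (· = i₀)).symm.map_eq, ← hrest]
  -- the factor indexed by `{i // i = i₀}` is a copy of `κ i₀`
  convert hprod using 3 <;> convert ((measurePreserving_piUnique _).symm _).map_eq.symm <;> rfl

lemma IsTestingLowerBound.le_measureReal_add {ε : ℝ} {μ ν : Measure α} [IsFiniteMeasure μ]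
    [IsFiniteMeasure ν] (h : IsTestingLowerBound (ENNReal.ofReal ε) μ ν) {A : Set α}
    (hA : MeasurableSet A) :
    ε ≤ μ.real A + ν.real Aᶜ := by
  rw [measureReal_def, measureReal_def,
    ← ENNReal.toReal_add (measure_ne_top _ _) (measure_ne_top _ _)]
  exact (ENNReal.ofReal_le_iff_le_toReal (by finiteness)).1 (h A hA)

end Testing

section Gaussian

open ProbabilityTheory

lemma gaussianPDF_le_gaussianPDF {a b x : ℝ} (v : ℝ≥0) (h : (x - b) ^ 2 ≤ (x - a) ^ 2) :
    gaussianPDF a v x ≤ gaussianPDF b v x := by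
  simp only [gaussianPDF, gaussianPDFReal]
  gcongr

lemma gaussianReal_restrict_le {a b : ℝ} {v : ℝ≥0} (hv : v ≠ 0) {S : Set ℝ} (hS : MeasurableSet S)
    (h : ∀ x ∈ S, (x - b) ^ 2 ≤ (x - a) ^ 2) :
    (gaussianReal a v).restrict S ≤ (gaussianReal b v).restrict S := by
  rw [gaussianReal_of_var_ne_zero _ hv, gaussianReal_of_var_ne_zero _ hv,
    restrict_withDensity hS, restrict_withDensity hS]
  exact withDensity_mono ((ae_restrict_iff' hS).2 (ae_of_all _ fun x hx =>
    gaussianPDF_le_gaussianPDF v (h x hx)))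

lemma gaussianReal_Iic_zero {m : ℝ} {v : ℝ≥0} (hv : v ≠ 0) :
    gaussianReal m v (Set.Iic 0) = gaussianReal (-m) v (Set.Ioi 0) := by
  have := nullSingletonClass_gaussianReal (μ := m) hv
  rw [← gaussianReal_map_neg, Measure.map_apply measurable_neg measurableSet_Ioi,
    ← measure_congr Iio_ae_eq_Iic]
  congr 1
  ext x
  simp

lemma isTestingLowerBound_gaussianReal_neg_of_nonneg {m : ℝ} (hm : 0 ≤ m) {v : ℝ≥0}
    (hv : v ≠ 0) :
    IsTestingLowerBound (2 * gaussianReal (-m) v (Set.Ioi 0))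
      (gaussianReal m v) (gaussianReal (-m) v) := by
  have h := isTestingLowerBound_of_restrict_le (μ := gaussianReal m v)
    (ν := gaussianReal (-m) v) measurableSet_Iic
    (gaussianReal_restrict_le hv measurableSet_Iic fun x (hx : x ≤ 0) => by nlinarith)
    (gaussianReal_restrict_le hv measurableSet_Iic.compl fun x (hx : ¬x ≤ 0) => by nlinarith)
  rwa [gaussianReal_Iic_zero hv, Set.compl_Iic, ← two_mul] at h

lemma gaussianReal_neg_Ioi_zero (m : ℝ) {σ : ℝ} (hσ : 0 < σ) :
    gaussianReal (-m) (σ ^ 2).toNNReal (Set.Ioi 0) = ENNReal.ofReal (Phic (m / σ)) := by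
  have hstd : (gaussianReal 0 1).map (fun x => σ * x - m) = gaussianReal (-m) (σ ^ 2).toNNReal := by
    rw [show (fun x => σ * x - m) = (· - m) ∘ (σ * ·) from rfl,
      ← Measure.map_map (by fun_prop) (by fun_prop), gaussianReal_map_const_mul,
      gaussianReal_map_sub_const]
    congr 1
    · ring
    · ext
      simp [sq_nonneg]
  rw [Phic, ENNReal.ofReal_toReal (measure_ne_top _ _), ← hstd,
    Measure.map_apply (by fun_prop) measurableSet_Ioi]
  congr 1
  ext x
  simp [div_lt_iff₀ hσ, mul_comm]

lemma isTestingLowerBound_gaussianReal_neg (m : ℝ) {σ : ℝ} (hσ : 0 < σ) :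
    IsTestingLowerBound (ENNReal.ofReal (2 * Phic (|m| / σ)))
      (gaussianReal m (σ ^ 2).toNNReal) (gaussianReal (-m) (σ ^ 2).toNNReal) := by
  have hv : (σ ^ 2).toNNReal ≠ 0 := by positivity
  have key : ∀ m, 0 ≤ m → IsTestingLowerBound (ENNReal.ofReal (2 * Phic (|m| / σ)))
      (gaussianReal m (σ ^ 2).toNNReal) (gaussianReal (-m) (σ ^ 2).toNNReal) := fun m hm => by
    rw [ENNReal.ofReal_mul zero_le_two, abs_of_nonneg hm, ← gaussianReal_neg_Ioi_zero m hσ]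
    simpa using isTestingLowerBound_gaussianReal_neg_of_nonneg hm hv
  rcases le_total 0 m with hm | hm
  · exact key m hm
  · simpa using (key (-m) (neg_nonneg.2 hm)).symm

end Gaussian

instance (p n : ℕ) (σ : ℝ) (θ : Fin p → ℝ) (η : Fin n → ℝ) :
    IsProbabilityMeasure (lawY p n σ θ η) := by
  unfold lawY
  infer_instance

lemma isTestingLowerBound_lawY_update {p n : ℕ} {σ : ℝ} (hσ : 0 < σ) (i₀ : Fin p) (Δ : ℝ)
    {η : Fin n → ℝ} (j : Fin n) (hη : |η j| = 1) :
    IsTestingLowerBound (ENNReal.ofReal (2 * Phic (|Δ| / σ)))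
      (lawY p n σ (Pi.single i₀ Δ) η)
      (lawY p n σ (Pi.single i₀ Δ) (Function.update η j (-η j))) := by
  refine IsTestingLowerBound.pi i₀ (IsTestingLowerBound.pi j ?_ fun l hl => ?_) fun i hi => ?_
  · have h := isTestingLowerBound_gaussianReal_neg (Δ * η j) hσ
    rw [abs_mul, hη, mul_one, ← mul_neg] at h
    simpa using h
  · simp [Function.update_of_ne hl]
  · simp [Pi.single_eq_of_ne hi]

section Loss

variable {n : ℕ} {a b : Fin n → ℝ}

lemma lossR_nonneg (a b : Fin n → ℝ) : 0 ≤ lossR a b :=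
  le_min (sum_nonneg fun _ _ => abs_nonneg _) (sum_nonneg fun _ _ => abs_nonneg _)

lemma sum_abs_sub_add_sum_abs_add (ha : a ∈ pmOne n) (hb : b ∈ pmOne n) :
    ∑ j, |a j - b j| + ∑ j, |a j + b j| = 2 * n := by
  rw [← sum_add_distrib]
  calc ∑ j, (|a j - b j| + |a j + b j|) = ∑ _j : Fin n, (2 : ℝ) := by
        refine sum_congr rfl fun j _ => ?_
        rcases ha j with h | h <;> rcases hb j with h' | h' <;> norm_num [h, h']
    _ = 2 * n := by simp [mul_comm]

lemma lossR_le (ha : a ∈ pmOne n) (hb : b ∈ pmOne n) : lossR a b ≤ 2 * n := by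
  rw [← sum_abs_sub_add_sum_abs_add ha hb]
  exact (min_le_left _ _).trans (le_add_of_nonneg_right (sum_nonneg fun _ _ => abs_nonneg _))

lemma sum_sum_disagree_eq (ha : a ∈ pmOne n) (hb : b ∈ pmOne n) :
    ∑ j, ∑ k, (if a j * a k ≠ b j * b k then (1 : ℝ) else 0)
      = (∑ j, |a j - b j|) * (∑ j, |a j + b j|) / 2 := by
  calc ∑ j, ∑ k, (if a j * a k ≠ b j * b k then (1 : ℝ) else 0)
      = ∑ j, ∑ k, (|a j - b j| * |a k + b k| + |a j + b j| * |a k - b k|) / 4 := by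
        -- a pair disagrees iff exactly one of `j`, `k` carries a sign mismatch
        refine sum_congr rfl fun j _ => sum_congr rfl fun k _ => ?_
        rcases ha j with h₁ | h₁ <;> rcases ha k with h₂ | h₂ <;>
          rcases hb j with h₃ | h₃ <;> rcases hb k with h₄ | h₄ <;> norm_num [h₁, h₂, h₃, h₄]
    _ = _ := by
        simp only [← sum_div, sum_add_distrib, ← mul_sum, ← sum_mul]
        ring

lemma mul_le_min_mul_add {S T : ℝ} (hS : 0 ≤ S) (hT : 0 ≤ T) : S * T ≤ min S T * (S + T) := by
  rcases le_total S T with h | h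
  · rw [min_eq_left h]; nlinarith
  · rw [min_eq_right h]; nlinarith

lemma sum_sum_disagree_le_mul_lossR (ha : a ∈ pmOne n) (hb : b ∈ pmOne n) :
    ∑ j, ∑ k, (if a j * a k ≠ b j * b k then (1 : ℝ) else 0) ≤ n * lossR a b := by
  have h := mul_le_min_mul_add (sum_nonneg (s := univ) fun j _ => abs_nonneg (a j - b j))
    (sum_nonneg (s := univ) fun j _ => abs_nonneg (a j + b j))
  rw [sum_abs_sub_add_sum_abs_add ha hb] at h
  rw [sum_sum_disagree_eq ha hb, lossR]
  linarith

end Loss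

section Risk

variable {p n : ℕ} {σ : ℝ} {f : (Fin p → Fin n → ℝ) → Fin n → ℝ} {η : Fin n → ℝ}

lemma measurableSet_mul_apply_ne (hf : Measurable f) (j k : Fin n) (c : ℝ) :
    MeasurableSet {y | f y j * f y k ≠ c} :=
  (measurableSet_singleton c).compl.preimage (by fun_prop)

lemma integrable_lossR (hf : Measurable f) (hfpm : ∀ y, f y ∈ pmOne n) (hη : η ∈ pmOne n)
    (μ : Measure (Fin p → Fin n → ℝ)) [IsFiniteMeasure μ] :
    Integrable (fun y => lossR (f y) η) μ := by
  refine .of_bound (by unfold lossR; fun_prop) (2 * n) (ae_of_all _ fun y => ?_)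
  rw [Real.norm_of_nonneg (lossR_nonneg _ _)]
  exact lossR_le (hfpm y) hη

lemma risk_le (hf : Measurable f) (hfpm : ∀ y, f y ∈ pmOne n) (hη : η ∈ pmOne n)
    (θ : Fin p → ℝ) : risk p n σ f θ η ≤ 2 * n := by
  calc risk p n σ f θ η ≤ ∫ _, (2 * n : ℝ) ∂lawY p n σ θ η :=
        integral_mono (integrable_lossR hf hfpm hη _) (integrable_const _)
          fun y => lossR_le (hfpm y) hη
    _ = 2 * n := by simp

lemma sum_sum_measureReal_disagree_le (hf : Measurable f) (hfpm : ∀ y, f y ∈ pmOne n)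
    (hη : η ∈ pmOne n) (θ : Fin p → ℝ) :
    ∑ j, ∑ k, (lawY p n σ θ η).real {y | f y j * f y k ≠ η j * η k}
      ≤ n * risk p n σ f θ η := by
  have hA := fun j k => measurableSet_mul_apply_ne hf j k (η j * η k)
  have hint := fun j k => (integrable_const (1 : ℝ)).indicator (μ := lawY p n σ θ η) (hA j k)
  calc ∑ j, ∑ k, (lawY p n σ θ η).real {y | f y j * f y k ≠ η j * η k}
      = ∫ y, ∑ j, ∑ k, {y | f y j * f y k ≠ η j * η k}.indicator (fun _ => (1 : ℝ)) y
          ∂lawY p n σ θ η := by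
        rw [integral_finsetSum _ fun j _ => integrable_finsetSum _ fun k _ => hint j k]
        refine sum_congr rfl fun j _ => ?_
        rw [integral_finsetSum _ fun k _ => hint j k]
        exact sum_congr rfl fun k _ => (integral_indicator_one (hA j k)).symm
    _ ≤ ∫ y, n * lossR (f y) η ∂lawY p n σ θ η := by
        refine integral_mono (integrable_finsetSum _ fun j _ => integrable_finsetSum _
          fun k _ => hint j k) ((integrable_lossR hf hfpm hη _).const_mul _) fun y => ?_
        refine (le_of_eq ?_).trans (sum_sum_disagree_le_mul_lossR (hfpm y) hη)
        simp only [Set.indicator_apply, Set.mem_ofPred_eq]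
    _ = n * risk p n σ f θ η := integral_const_mul _ _

end Risk

lemma card_mul_le_two_mul_sum_of_involutive {ι : Type*} [Fintype ι] {g : ι → ι}
    (hg : Function.Involutive g) {F : ι → ℝ} {c : ℝ} (h : ∀ i, c ≤ F i + F (g i)) :
    Fintype.card ι * c ≤ 2 * ∑ i, F i := by
  calc Fintype.card ι * c = ∑ _i : ι, c := by simp
    _ ≤ ∑ i, (F i + F (g i)) := sum_le_sum fun i _ => h i
    _ = 2 * ∑ i, F i := by
        rw [sum_add_distrib, two_mul, ← hg.coe_toPerm, Equiv.sum_comp (hg.toPerm g) F]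

lemma eucNorm_single {p : ℕ} (i : Fin p) (Δ : ℝ) : eucNorm (Pi.single i Δ) = |Δ| := by
  rw [eucNorm, sum_eq_single i (fun j _ hj => by simp [Pi.single_eq_of_ne hj]) (by simp),
    Pi.single_eq_same, Real.sqrt_sq_eq_abs]

section SignPatterns

variable {n : ℕ}

def signVec (s : Fin n → Bool) : Fin n → ℝ := fun j => if s j then 1 else -1

lemma signVec_mem_pmOne (s : Fin n → Bool) : signVec s ∈ pmOne n := fun j => by
  by_cases h : s j <;> simp [signVec, h]

lemma abs_signVec (s : Fin n → Bool) (j : Fin n) : |signVec s j| = 1 := by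
  rcases signVec_mem_pmOne s j with h | h <;> simp [h]

lemma signVec_update_not (s : Fin n → Bool) (j : Fin n) :
    signVec (Function.update s j (!s j)) = Function.update (signVec s) j (-signVec s j) := by
  ext l
  rcases eq_or_ne l j with rfl | hl
  · by_cases h : s l <;> simp [signVec, h]
  · simp [signVec, Function.update_of_ne hl]

lemma involutive_update_not (j : Fin n) :
    Function.Involutive fun s : Fin n → Bool => Function.update s j (!s j) := fun s => by
  simp

end SignPatterns

section Averaging

variable {p n : ℕ} {σ : ℝ} {f : (Fin p → Fin n → ℝ) → Fin n → ℝ}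

lemma card_mul_Phic_le_sum_measureReal_disagree (hσ : 0 < σ) (i₀ : Fin p) (Δ : ℝ)
    (hf : Measurable f) {j k : Fin n} (hjk : j ≠ k) :
    Fintype.card (Fin n → Bool) * Phic (|Δ| / σ) ≤
      ∑ s, (lawY p n σ (Pi.single i₀ Δ) (signVec s)).real
        {y | f y j * f y k ≠ signVec s j * signVec s k} := by
  set A := fun s : Fin n → Bool => {y | f y j * f y k ≠ signVec s j * signVec s k}
  set P := fun s : Fin n → Bool => lawY p n σ (Pi.single i₀ Δ) (signVec s)
  suffices h : ∀ s, 2 * Phic (|Δ| / σ) ≤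
      (P s).real (A s) + (P (Function.update s j (!s j))).real (A (Function.update s j (!s j))) by
    have := card_mul_le_two_mul_sum_of_involutive (involutive_update_not j) h
    linarith
  intro s
  have hsub : (A s)ᶜ ⊆ A (Function.update s j (!s j)) := fun y (hy : ¬_ ≠ _) => by
    have hne : signVec s j * signVec s k ≠ 0 :=
      mul_ne_zero (abs_pos.1 (by simp [abs_signVec])) (abs_pos.1 (by simp [abs_signVec]))
    simp only [A, Set.mem_ofPred_eq, signVec_update_not, Function.update_self,
      Function.update_of_ne hjk.symm, not_not.1 hy, neg_mul]
    exact fun h => hne (self_eq_neg.1 h)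
  calc 2 * Phic (|Δ| / σ) ≤ (P s).real (A s) + (P (Function.update s j (!s j))).real (A s)ᶜ := by
        simp only [P, signVec_update_not]
        exact (isTestingLowerBound_lawY_update hσ i₀ Δ j (abs_signVec s j)).le_measureReal_add
          (measurableSet_mul_apply_ne hf j k _)
    _ ≤ _ := add_le_add_right (measureReal_mono (μ := P _) hsub) _

lemma card_mul_Phic_le_sum_risk (hn : 0 < n) (hσ : 0 < σ) (i₀ : Fin p) (Δ : ℝ)
    (hf : Measurable f) (hfpm : ∀ y, f y ∈ pmOne n) :
    (n - 1) * (Fintype.card (Fin n → Bool) * Phic (|Δ| / σ))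
      ≤ ∑ s, risk p n σ f (Pi.single i₀ Δ) (signVec s) := by
  set T := fun s j k => (lawY p n σ (Pi.single i₀ Δ) (signVec s)).real
    {y | f y j * f y k ≠ signVec s j * signVec s k}
  refine le_of_mul_le_mul_left ?_ (Nat.cast_pos.2 hn : (0 : ℝ) < n)
  calc (n : ℝ) * ((n - 1) * (Fintype.card (Fin n → Bool) * Phic (|Δ| / σ)))
      = ∑ j : Fin n, #(univ.erase j) • (Fintype.card (Fin n → Bool) * Phic (|Δ| / σ)) := by
        simp [card_erase_of_mem, Nat.cast_sub (Nat.one_le_iff_ne_zero.2 hn.ne')]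
    _ ≤ ∑ j, ∑ k ∈ univ.erase j, ∑ s, T s j k :=
        sum_le_sum fun j _ => card_nsmul_le_sum _ _ _ fun k hk =>
          card_mul_Phic_le_sum_measureReal_disagree hσ i₀ Δ hf (ne_of_mem_erase hk).symm
    _ ≤ ∑ j, ∑ k, ∑ s, T s j k :=
        sum_le_sum fun j _ => sum_le_sum_of_subset_of_nonneg (erase_subset _ _)
          fun _ _ _ => sum_nonneg fun _ _ => measureReal_nonneg
    _ = ∑ s, ∑ j, ∑ k, T s j k := (sum_congr rfl fun _ _ => sum_comm).trans sum_comm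
    _ ≤ ∑ s, n * risk p n σ f (Pi.single i₀ Δ) (signVec s) :=
        sum_le_sum fun s _ => sum_sum_measureReal_disagree_le hf hfpm (signVec_mem_pmOne s) _
    _ = n * ∑ s, risk p n σ f (Pi.single i₀ Δ) (signVec s) := (mul_sum _ _ _).symm

lemma exists_signVec_le_risk (hn : 0 < n) (hσ : 0 < σ) (i₀ : Fin p) (Δ : ℝ)
    (hf : Measurable f) (hfpm : ∀ y, f y ∈ pmOne n) :
    ∃ s, (n - 1) * Phic (|Δ| / σ) ≤ risk p n σ f (Pi.single i₀ Δ) (signVec s) := by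
  have h := card_mul_Phic_le_sum_risk hn hσ i₀ Δ hf hfpm
  rw [mul_left_comm, ← nsmul_eq_mul, ← card_univ, ← sum_const] at h
  obtain ⟨s, -, hs⟩ := exists_le_of_sum_le univ_nonempty h
  exact ⟨s, hs⟩

end Averaging

/-- Proposition 1: `Ψ_Δ ≥ c Φᶜ(Δ/σ)` for an absolute constant `c > 0`. -/
theorem statement0 :
    ∃ c : ℝ, 0 < c ∧ ∀ (n p : ℕ) (σ Δ : ℝ), 2 ≤ n → 1 ≤ p → 0 < σ → 0 < Δ →
      c * Phic (Δ / σ) ≤ minimaxRisk p n σ Δ := by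
  refine ⟨1 / 2, by norm_num, fun n p σ Δ hn hp hσ hΔ => ?_⟩
  set θ : Fin p → ℝ := Pi.single ⟨0, hp⟩ Δ
  have : Nonempty {f : (Fin p → Fin n → ℝ) → Fin n → ℝ // Measurable f ∧ ∀ y, f y ∈ pmOne n} :=
    ⟨⟨fun _ _ => 1, measurable_const, fun _ _ => Or.inl rfl⟩⟩
  refine le_ciInf fun ⟨f, hf, hfpm⟩ => ?_
  have hbdd : BddAbove (Set.range fun x : Omega p n Δ => (n : ℝ)⁻¹ * risk p n σ f x.1.1 x.1.2) :=
    ⟨2, Set.forall_mem_range.2 fun x => by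
      have := risk_le (σ := σ) hf hfpm x.2.2 x.1.1
      rw [inv_mul_le_iff₀ (by positivity)]
      linarith⟩
  obtain ⟨s, hs⟩ := exists_signVec_le_risk (by omega) hσ ⟨0, hp⟩ Δ hf hfpm
  rw [abs_of_pos hΔ] at hs
  have hθs : (θ, signVec s) ∈ Omega p n Δ :=
    ⟨by simp [θ, eucNorm_single, abs_of_pos hΔ], signVec_mem_pmOne s⟩
  calc 1 / 2 * Phic (Δ / σ) ≤ (n : ℝ)⁻¹ * ((n - 1) * Phic (Δ / σ)) := by
        have h2n : (2 : ℝ) ≤ n := by exact_mod_cast hn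
        rw [← mul_assoc]
        gcongr
        · exact ENNReal.toReal_nonneg
        · rw [inv_mul_eq_div, le_div_iff₀ (by positivity)]
          linarith
    _ ≤ (n : ℝ)⁻¹ * risk p n σ f θ (signVec s) := by gcongr
    _ ≤ _ := le_ciSup hbdd ⟨_, hθs⟩

end
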